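/- arXiv:2402.15262 — 2 statements merged into one kernel-verified Lean document; each statement's English description precedes it below -/
import Mathlib

section
/- With B = J_k(β), β ≠ 0, and a = e₁, the linear span (over ℝ) of the abstract rules of the k memory units, viewed as sequences, equals the space of all sequences of the form {p(j)·β^j}_{j=0}^∞ where p ranges over real polynomials of degree at most k-1. -/
/-!
Writing `J_k(β) = N + β • 1` with `N` the nilpotent shift, the binomial theorem gives
`(e₁ᵀ J_k(β)^j)_i = (j choose i) β^(j-i)`. For `β ≠ 0` this is `j(j-1)⋯(j-i+1) β^j / (i! β^i)`,
i.e. the sequence `j ↦ p_i(j) β^j` for the rescaled falling factorial `p_i` of degree `i`.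
Polynomials of degrees `0, …, k-1` span all polynomials of degree `< k`, and `p ↦ (p(j) β^j)_j`
is linear, so the span of the rules is the image of that space.
-/

open Matrix

/-- The `k × k` Jordan block with eigenvalue `β`. -/
def jordanBlock (k : ℕ) (β : ℝ) : Matrix (Fin k) (Fin k) ℝ :=
  Matrix.of fun i j => if (i : ℕ) = (j : ℕ) then β else if (j : ℕ) = (i : ℕ) + 1 then 1 else 0

section JordanBlock

variable {k : ℕ}

lemma jordanBlock_eq_jordanBlock_zero_add_smul_one (β : ℝ) :
    jordanBlock k β = jordanBlock k 0 + β • 1 := by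
  ext i i'
  by_cases h : (i : ℕ) = i'
  · simp [jordanBlock, Fin.ext h]
  · simp [jordanBlock, h, one_apply_ne (fun e : i = i' => h (congrArg Fin.val e))]

lemma jordanBlock_zero_apply (i i' : Fin k) :
    jordanBlock k 0 i i' = if (i : ℕ) + 1 = i' then 1 else 0 := by
  simp only [jordanBlock, of_apply]
  split_ifs <;> first | rfl | omega

lemma jordanBlock_zero_pow_apply (m : ℕ) (i i' : Fin k) :
    (jordanBlock k 0 ^ m) i i' = if (i : ℕ) + m = i' then 1 else 0 := by
  induction m generalizing i with
  | zero => simp [one_apply, Fin.ext_iff]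
  | succ m ih =>
    rw [pow_succ', mul_apply]
    simp only [jordanBlock_zero_apply, ih, boole_mul]
    by_cases hi : (i : ℕ) + 1 < k
    · have hx : ∀ x : Fin k, (i : ℕ) + 1 = x ↔ x = ⟨i + 1, hi⟩ := by simp [Fin.ext_iff, eq_comm]
      simp only [hx, Finset.sum_ite_eq', Finset.mem_univ, if_true, add_assoc, add_comm 1 m]
    · rw [Finset.sum_eq_zero fun x _ => if_neg (by omega), if_neg (by omega)]

lemma jordanBlock_pow_apply (β : ℝ) (j : ℕ) (i i' : Fin k) :
    (jordanBlock k β ^ j) i i' =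
      if (i : ℕ) ≤ i' then (j.choose (i' - i) : ℝ) * β ^ (j - (i' - i)) else 0 := by
  have hcomm : Commute (jordanBlock k 0) (β • 1) := (Commute.one_right _).smul_right β
  rw [jordanBlock_eq_jordanBlock_zero_add_smul_one, hcomm.add_pow, Matrix.sum_apply]
  simp only [smul_pow, one_pow, mul_smul_one, ← nsmul_eq_mul', Matrix.smul_apply, nsmul_eq_mul,
    jordanBlock_zero_pow_apply, smul_eq_mul, mul_ite, mul_one, mul_zero]
  split_ifs with hle
  · have hx : ∀ x, (i : ℕ) + x = i' ↔ x = i' - i := fun x => by omega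
    simp only [hx, Finset.sum_ite_eq', Finset.mem_range]
    split_ifs with hj
    · rfl
    · simp [Nat.choose_eq_zero_of_lt (by omega : j < (i' : ℕ) - i)]
  · exact Finset.sum_eq_zero fun x _ => if_neg (by omega)

end JordanBlock

namespace Polynomial

lemma descPochhammer_eval_mul_pow {R : Type*} [CommRing R] (n j : ℕ) (β : R) :
    (descPochhammer R n).eval (j : R) * β ^ j =
      (n.factorial * β ^ n) * (j.choose n * β ^ (j - n)) := by
  rw [descPochhammer_eval_eq_descFactorial, Nat.descFactorial_eq_factorial_mul_choose]
  rcases le_or_gt n j with h | h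
  · rw [← Nat.add_sub_cancel' h, pow_add, Nat.add_sub_cancel_left]
    push_cast
    ring
  · simp [Nat.choose_eq_zero_of_lt h]

noncomputable def Sequence.scaledDescPochhammer {K : Type*} [Field K] [CharZero K] {β : K}
    (hβ : β ≠ 0) : Sequence K where
  elems' n := C (n.factorial * β ^ n)⁻¹ * descPochhammer K n
  degree_eq' n := by
    rw [degree_C_mul (inv_ne_zero <|
      mul_ne_zero (Nat.cast_ne_zero.mpr n.factorial_ne_zero) (pow_ne_zero n hβ)),
      degree_eq_natDegree (monic_descPochhammer K n).ne_zero, descPochhammer_natDegree]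

lemma Sequence.scaledDescPochhammer_eval_mul_pow {K : Type*} [Field K] [CharZero K] {β : K}
    (hβ : β ≠ 0) (n j : ℕ) :
    (scaledDescPochhammer hβ n).eval (j : K) * β ^ j = j.choose n * β ^ (j - n) := by
  have h : (n.factorial * β ^ n : K) ≠ 0 :=
    mul_ne_zero (Nat.cast_ne_zero.mpr n.factorial_ne_zero) (pow_ne_zero n hβ)
  rw [← inv_mul_cancel_left₀ h (_ * β ^ (j - n)), ← descPochhammer_eval_mul_pow]
  simp only [scaledDescPochhammer, eval_mul, eval_C, mul_assoc]

noncomputable def evalMulPow {R : Type*} [CommSemiring R] (β : R) : R[X] →ₗ[R] ℕ → R where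
  toFun p j := p.eval (j : R) * β ^ j
  map_add' p q := by funext j; simp [add_mul]
  map_smul' c p := by funext j; simp [mul_assoc]

lemma mem_degreeLT_iff_natDegree_le_pred {R : Type*} [Semiring R] {k : ℕ} (hk : 0 < k)
    {p : R[X]} : p ∈ degreeLT R k ↔ p.natDegree ≤ k - 1 := by
  rw [← Nat.sub_add_cancel hk, degreeLT_succ_eq_degreeLE, mem_degreeLE, Nat.add_sub_cancel,
    natDegree_le_iff_degree_le]

end Polynomial

/-- For `B = J_k(β)` with `β ≠ 0` and `a = e₁`, the real linear span of the
abstract rules of the `k` memory units (viewed as sequences `ℕ → ℝ`) equals the set of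
sequences of the form `j ↦ p(j) · β^j` with `p` a real polynomial of degree `≤ k - 1`. -/
theorem jordan_span_eq_poly (k : ℕ) (hk : 0 < k) (β : ℝ) (hβ : β ≠ 0) :
    ∀ f : ℕ → ℝ,
      f ∈ Submodule.span ℝ
        {r : ℕ → ℝ | ∃ i : Fin k,
          r = fun j => Matrix.vecMul (Pi.single (⟨0, hk⟩ : Fin k) (1 : ℝ))
            (jordanBlock k β ^ j) i} ↔
      ∃ p : Polynomial ℝ, p.natDegree ≤ k - 1 ∧ f = fun j : ℕ => p.eval (j : ℝ) * β ^ j := by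
  intro f
  set S := Polynomial.Sequence.scaledDescPochhammer hβ
  have hrule (i : Fin k) :
      (fun j => Matrix.vecMul (Pi.single (⟨0, hk⟩ : Fin k) (1 : ℝ)) (jordanBlock k β ^ j) i)
        = Polynomial.evalMulPow β (S i) := by
    funext j
    simp [jordanBlock_pow_apply, Polynomial.evalMulPow, S,
      Polynomial.Sequence.scaledDescPochhammer_eval_mul_pow]
  have hrules : {r : ℕ → ℝ | ∃ i : Fin k,
      r = fun j => Matrix.vecMul (Pi.single (⟨0, hk⟩ : Fin k) (1 : ℝ)) (jordanBlock k β ^ j) i}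
        = Polynomial.evalMulPow β '' (S '' Set.Iio k) := by
    ext r
    constructor
    · rintro ⟨i, rfl⟩
      exact ⟨S i, ⟨i, i.isLt, rfl⟩, (hrule i).symm⟩
    · rintro ⟨_, ⟨n, hn, rfl⟩, rfl⟩
      exact ⟨⟨n, hn⟩, (hrule ⟨n, hn⟩).symm⟩
  rw [hrules, Submodule.span_image,
    S.span_degreeLT fun i _ => (Polynomial.leadingCoeff_ne_zero.mpr (S.ne_zero i)).isUnit,
    Submodule.mem_map]
  simp only [Polynomial.mem_degreeLT_iff_natDegree_le_pred hk, eq_comm (a := f)]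
  rfl
end

section
/- Let U be a memory update rule U : ℝ^{n×k} × ℝ^n → ℝ^{n×k} (no hidden state) and Q ∈ ℝ^{k×k} invertible, with U^Q(M, g) := U(MQ⁻¹, g)·Q. Then the map φ(M, L) := (MQ, Q⁻¹L), restricted to states with rank(M) = k, is a partial isomorphism between the RLLC optimizer built from U and the RLLC optimizer built from U^Q: it intertwines the state updates F(M,L,g) = (U(M,g), L + c₂M⁺g) and preserves the parameter update G(M,L,g) = -c₁ML. -/
open Matrix

/-- Moore-Penrose pseudoinverse of a full-column-rank matrix. -/
noncomputable def pinv {n k : ℕ} (M : Matrix (Fin n) (Fin k) ℝ) :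
    Matrix (Fin k) (Fin n) ℝ := (Mᵀ * M)⁻¹ * Mᵀ

lemma pinv_mul_unit {n k : ℕ} (M : Matrix (Fin n) (Fin k) ℝ)
    (Q : Matrix (Fin k) (Fin k) ℝ) (hQ : IsUnit Q) :
    pinv (M * Q) = Q⁻¹ * pinv M := by
  have hdt : IsUnit Qᵀ.det := by
    rw [Matrix.det_transpose]; exact (Matrix.isUnit_iff_isUnit_det Q).mp hQ
  have h1 : (M * Q)ᵀ * (M * Q) = Qᵀ * (Mᵀ * M) * Q := by
    simp [Matrix.transpose_mul, Matrix.mul_assoc]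
  rw [pinv, pinv, h1, Matrix.transpose_mul, Matrix.mul_inv_rev, Matrix.mul_inv_rev,
    Matrix.mul_assoc, Matrix.mul_assoc, ← Matrix.mul_assoc (Qᵀ)⁻¹,
    Matrix.nonsing_inv_mul _ hdt, Matrix.one_mul]

/-- For a memory update rule `U` (no hidden state) and invertible `Q`, with
`U^Q(M,g) := U(M Q⁻¹, g) Q`, the map `φ(M,L) = (M Q, Q⁻¹ L)` restricted to rank-`k`
states is a partial isomorphism between the RLLC optimizers built from `U` and from
`U^Q`: it intertwines the state updates `F(M,L,g) = (U(M,g), L + c₂ M⁺ g)` and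
preserves the parameter update `G(M,L,g) = -c₁ M L`. -/
theorem RLLC_linear_invariance (n k : ℕ)
    (U : Matrix (Fin n) (Fin k) ℝ → (Fin n → ℝ) → Matrix (Fin n) (Fin k) ℝ)
    (Q : Matrix (Fin k) (Fin k) ℝ) (hQ : IsUnit Q) (c₁ c₂ : ℝ)
    (M : Matrix (Fin n) (Fin k) ℝ) (hrank : M.rank = k) (L : Fin k → ℝ) (g : Fin n → ℝ) :
    -- φ intertwines the state update functions:
    (U (M * Q * Q⁻¹) g * Q = U M g * Q ∧
      Q⁻¹ *ᵥ L + c₂ • (pinv (M * Q) *ᵥ g) = Q⁻¹ *ᵥ (L + c₂ • (pinv M *ᵥ g))) ∧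
    -- φ preserves the parameter update function:
    (-c₁) • ((M * Q) *ᵥ (Q⁻¹ *ᵥ L)) = (-c₁) • (M *ᵥ L) := by
  have hd : IsUnit Q.det := (Matrix.isUnit_iff_isUnit_det Q).mp hQ
  have hMQ : M * Q * Q⁻¹ = M := by
    rw [Matrix.mul_assoc, Matrix.mul_nonsing_inv _ hd, Matrix.mul_one]
  refine ⟨⟨by rw [hMQ], ?_⟩, ?_⟩
  · rw [pinv_mul_unit M Q hQ, Matrix.mulVec_add, ← Matrix.mulVec_mulVec,
      Matrix.mulVec_smul]
  · rw [Matrix.mulVec_mulVec, hMQ]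
end
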